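/- arXiv:2604.17577 — 2 statements merged into one kernel-verified Lean document; each statement's English description precedes it below -/
import Mathlib

section
/- Finite chamber decomposition of the quantile problem: Fix α ∈ (0,1). Then sup_{W ∈ W̄} Q_{n,α}(W) = max over admissible chambers Γ of sup_{W ∈ cl(F_Γ)} W^{k_{α,Γ}}, where k_{α,Γ} is the quantile count vector of the chamber Γ. -/
open Finset Filter Topology
open scoped Classical

noncomputable section

/-- The closed Arrow–Debreu wealth simplex `{W ∈ [0,∞)^m : Σ q_i W_i = 1}`. -/
def closedSimplex {m : ℕ} (q : Fin m → ℝ) : Set (Fin m → ℝ) :=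
  {W | (∀ i, 0 ≤ W i) ∧ ∑ i, q i * W i = 1}

/-- The open Arrow–Debreu wealth simplex `{W ∈ (0,∞)^m : Σ q_i W_i = 1}`. -/
def openSimplex {m : ℕ} (q : Fin m → ℝ) : Set (Fin m → ℝ) :=
  {W | (∀ i, 0 < W i) ∧ ∑ i, q i * W i = 1}

/-- The finite set `C_n` of count vectors `k : Fin m → ℕ` with `Σ k_i = n`. -/
def countFinset (m n : ℕ) : Finset (Fin m → ℕ) :=
  (Fintype.piFinset fun _ : Fin m => Finset.range (n + 1)).filter fun k => ∑ i, k i = n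

/-- The monomial `W^k := Π_i W_i^{k_i}` (with the convention `0^0 = 1`). -/
def mono {m : ℕ} (W : Fin m → ℝ) (k : Fin m → ℕ) : ℝ := ∏ i, W i ^ k i

/-- The multinomial probability `π_k = (n!/(k_1!⋯k_m!))·Π p_i^{k_i}`. -/
def countProb {m : ℕ} (p : Fin m → ℝ) (k : Fin m → ℕ) : ℝ :=
  (Nat.multinomial Finset.univ k : ℝ) * ∏ i, p i ^ k i

/-- The upper α-quantile of terminal wealth
`Q_{n,α}(W) := sup{t ∈ [0,∞) : Σ_{k ∈ C_n : W^k ≥ t} π_k ≥ α}`. -/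
def upperQuantile {m : ℕ} (p : Fin m → ℝ) (n : ℕ) (α : ℝ) (W : Fin m → ℝ) : ℝ :=
  sSup {t : ℝ | 0 ≤ t ∧
    α ≤ ∑ k ∈ countFinset m n, if t ≤ mono W k then countProb p k else 0}

/-- The union of the count hyperplanes `H_{k,ℓ}`. -/
def hyperUnion (m n : ℕ) : Set (Fin m → ℝ) :=
  {u | ∃ k ∈ countFinset m n, ∃ l ∈ countFinset m n,
    k ≠ l ∧ ∑ i, ((k i : ℝ) - (l i : ℝ)) * u i = 0}

/-- A chamber is a connected component of the complement of the count arrangement. -/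
def IsChamber (m n : ℕ) (Γ : Set (Fin m → ℝ)) : Prop :=
  ∃ u ∈ (hyperUnion m n)ᶜ, Γ = connectedComponentIn (hyperUnion m n)ᶜ u

/-- `F_Γ := {W ∈ W⁺⁺ : log W ∈ Γ}`. -/
def chamberFace {m : ℕ} (q : Fin m → ℝ) (Γ : Set (Fin m → ℝ)) : Set (Fin m → ℝ) :=
  {W | W ∈ openSimplex q ∧ (fun i => Real.log (W i)) ∈ Γ}

/-- `k` is the quantile count vector `k_{α,Γ}` of the chamber `Γ`: the tail mass at `W^k`
is at least `α`, while the strict tail mass is below `α`, for every `W ∈ F_Γ`. -/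
def IsQuantileVec {m : ℕ} (p q : Fin m → ℝ) (n : ℕ) (α : ℝ) (Γ : Set (Fin m → ℝ))
    (k : Fin m → ℕ) : Prop :=
  k ∈ countFinset m n ∧
  ∀ W ∈ chamberFace q Γ,
    α ≤ (∑ l ∈ countFinset m n, if mono W k ≤ mono W l then countProb p l else 0) ∧
    (∑ l ∈ countFinset m n, if mono W k < mono W l then countProb p l else 0) < α

/-!
In log coordinates `u = log W`, the comparison `W^k ≤ W^ℓ` is the sign of the linear form
`Σ (ℓ_i - k_i) u_i`, which cannot change on a connected set avoiding all hyperplanes `H_{k,ℓ}`.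
So in a chamber the order of the monomials, hence the quantile count vector `k = k_{α,Γ}`, is
fixed, and since non-strict comparisons pass to limits and strict ones are open, the quantile
equals `W^k` on all of `cl(F_Γ)`. Every `W` of the closed simplex lies in such a closure: along
`u_i(ε) = log W_i + ε v_i` (with `-1/ε` in place of `log W_i` when `W_i = 0`), rescaled into the
simplex, `ε · Σ (k_i - ℓ_i) u_i(ε)` is a quadratic in `ε` whose leading coefficient is nonzero for
generic `v`, so for small `ε > 0` the curve stays in one chamber while it tends to `W`. Finally
`W^k` attains its supremum on the compact set `cl(F_Γ)`.
-/

theorem IsPreconnected.pos_of_pos {X : Type*} [TopologicalSpace X] {s : Set X}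
    (hs : IsPreconnected s) {g : X → ℝ} (hg : ContinuousOn g s) (h0 : ∀ x ∈ s, g x ≠ 0)
    {x y : X} (hx : x ∈ s) (hy : y ∈ s) (hgx : 0 < g x) : 0 < g y := by
  by_contra! hgy
  obtain ⟨z, hz, hgz⟩ := hs.intermediate_value hy hx hg ⟨hgy, hgx.le⟩
  exact h0 z hz hgz

theorem eventually_nhdsNE_quadratic_ne_zero {a b c : ℝ} (hc : c ≠ 0) (x₀ : ℝ) :
    ∀ᶠ ε in 𝓝[≠] x₀, a + b * ε + c * ε ^ 2 ≠ 0 := by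
  open Polynomial in
  set P : ℝ[X] := C a + C b * X + C c * X ^ 2
  have hP : P ≠ 0 := fun h => hc (by simpa [P] using congr_arg (coeff · 2) h)
  filter_upwards [nhdsNE_le_cofinite x₀ (finite_setOfPred_isRoot hP).eventually_cofinite_notMem]
    with ε hε
  simpa [P] using hε

theorem exists_forall_dotProduct_ne_zero {ι κ : Type*} [Finite ι] [Fintype κ]
    (c : ι → κ → ℝ) (hc : ∀ j, c j ≠ 0) : ∃ v : κ → ℝ, ∀ j, c j ⬝ᵥ v ≠ 0 := by
  obtain ⟨f, hf⟩ := Module.exists_dual_forall_apply_ne_zero (K := ℝ) c hc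
  refine ⟨fun i => f fun j => if i = j then 1 else 0, fun j => ?_⟩
  simpa [dotProduct, LinearMap.pi_apply_eq_sum_univ f (c j)] using hf j

theorem sum_ite_le_sum_ite {ι : Type*} {s : Finset ι} {P Q : ι → Prop} [DecidablePred P]
    [DecidablePred Q] {w : ι → ℝ} (hw : ∀ i ∈ s, 0 ≤ w i) (hPQ : ∀ i ∈ s, P i → Q i) :
    (∑ i ∈ s, if P i then w i else 0) ≤ ∑ i ∈ s, if Q i then w i else 0 :=
  Finset.sum_le_sum fun i hi => by
    by_cases hP : P i
    · simp [hP, hPQ i hi hP]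
    · simpa [hP] using ite_nonneg (hw i hi) le_rfl

theorem exists_weighted_quantile {ι : Type*} (s : Finset ι) (f w : ι → ℝ) {α : ℝ}
    (hα : 0 < α) (hαs : α ≤ ∑ i ∈ s, w i) :
    ∃ k ∈ s, α ≤ (∑ l ∈ s, if f k ≤ f l then w l else 0) ∧
      (∑ l ∈ s, if f k < f l then w l else 0) < α := by
  set A := s.filter fun k => α ≤ ∑ l ∈ s, if f k ≤ f l then w l else 0
  have hs : s.Nonempty := Finset.nonempty_of_sum_ne_zero (hα.trans_le hαs).ne'
  have hA : A.Nonempty := by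
    obtain ⟨k₀, hk₀, hmin⟩ := s.exists_min_image f hs
    refine ⟨k₀, Finset.mem_filter.2 ⟨hk₀, ?_⟩⟩
    rwa [Finset.sum_congr rfl fun l hl => if_pos (hmin l hl)]
  obtain ⟨k, hkA, hmax⟩ := A.exists_max_image f hA
  obtain ⟨hks, hktail⟩ := Finset.mem_filter.1 hkA
  refine ⟨k, hks, hktail, ?_⟩
  by_contra! hge
  set U := s.filter fun l => f k < f l
  have hU : U.Nonempty := by
    by_contra hU
    rw [Finset.not_nonempty_iff_eq_empty, Finset.filter_eq_empty_iff] at hU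
    rw [Finset.sum_eq_zero fun l hl => if_neg (hU hl)] at hge
    linarith
  obtain ⟨k', hk'U, hmin⟩ := U.exists_min_image f hU
  obtain ⟨hk's, hkk'⟩ := Finset.mem_filter.1 hk'U
  have hk'A : k' ∈ A := by
    refine Finset.mem_filter.2 ⟨hk's, hge.trans_eq (Finset.sum_congr rfl fun l hl => ?_)⟩
    exact if_congr ⟨fun h => hmin l (Finset.mem_filter.2 ⟨hl, h⟩), hkk'.trans_le⟩ rfl rfl
  exact (hmax k' hk'A).not_gt hkk'

section Counts

variable {m n : ℕ}

theorem mem_countFinset {k : Fin m → ℕ} : k ∈ countFinset m n ↔ ∑ i, k i = n := by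
  refine ⟨fun h => (Finset.mem_filter.1 h).2, fun h => Finset.mem_filter.2 ⟨?_, h⟩⟩
  refine Fintype.mem_piFinset.2 fun i => Finset.mem_range_succ_iff.2 ?_
  exact h ▸ Finset.single_le_sum (fun _ _ => Nat.zero_le _) (Finset.mem_univ i)

theorem sum_countProb {p : Fin m → ℝ} (hpsum : ∑ i, p i = 1) :
    ∑ k ∈ countFinset m n, countProb p k = 1 := by
  have hC : countFinset m n = Finset.univ.piAntidiag n := by
    ext k
    simp [mem_countFinset, Finset.mem_piAntidiag]
  unfold countProb
  rw [hC, ← Finset.sum_pow_eq_sum_piAntidiag, hpsum, one_pow]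

theorem countProb_nonneg {p : Fin m → ℝ} (hp : ∀ i, 0 ≤ p i) (k : Fin m → ℕ) :
    0 ≤ countProb p k :=
  mul_nonneg (Nat.cast_nonneg _) (Finset.prod_nonneg fun i _ => pow_nonneg (hp i) _)

theorem sum_cast_sub_eq_zero {k l : Fin m → ℕ} (hk : k ∈ countFinset m n)
    (hl : l ∈ countFinset m n) : ∑ i, ((k i : ℝ) - l i) = 0 := by
  rw [Finset.sum_sub_distrib, sub_eq_zero]
  exact_mod_cast (mem_countFinset.1 hk).trans (mem_countFinset.1 hl).symm

theorem notMem_hyperUnion_iff {u : Fin m → ℝ} :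
    u ∉ hyperUnion m n ↔ ∀ k ∈ countFinset m n, ∀ l ∈ countFinset m n, k ≠ l →
      ∑ i, ((k i : ℝ) - l i) * u i ≠ 0 := by
  simp [hyperUnion]

theorem notMem_hyperUnion_add_const {u : Fin m → ℝ} (hu : u ∉ hyperUnion m n) (c : ℝ) :
    (fun i => u i + c) ∉ hyperUnion m n := by
  rw [notMem_hyperUnion_iff] at hu ⊢
  intro k hk l hl hkl
  simpa only [mul_add, Finset.sum_add_distrib, ← Finset.sum_mul, sum_cast_sub_eq_zero hk hl,
    zero_mul, add_zero] using hu k hk l hl hkl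

theorem exists_forall_sum_sub_mul_ne_zero (m n : ℕ) :
    ∃ v : Fin m → ℝ, ∀ k ∈ countFinset m n, ∀ l ∈ countFinset m n, k ≠ l →
      ∑ i, ((k i : ℝ) - l i) * v i ≠ 0 := by
  set D := (countFinset m n ×ˢ countFinset m n).filter fun d => d.1 ≠ d.2
  have hD : ∀ d : D, (fun i => (d.1.1 i : ℝ) - d.1.2 i) ≠ 0 := fun d h =>
    (Finset.mem_filter.1 d.2).2 <| funext fun i => by exact_mod_cast sub_eq_zero.1 (congr_fun h i)
  obtain ⟨v, hv⟩ := exists_forall_dotProduct_ne_zero _ hD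
  exact ⟨v, fun k hk l hl hkl => hv ⟨(k, l), by simp [D, hk, hl, hkl]⟩⟩

end Counts

section Monomials

variable {m : ℕ}

theorem mono_nonneg {W : Fin m → ℝ} (hW : ∀ i, 0 ≤ W i) (k : Fin m → ℕ) : 0 ≤ mono W k :=
  Finset.prod_nonneg fun i _ => pow_nonneg (hW i) _

theorem continuous_mono (k : Fin m → ℕ) : Continuous fun W : Fin m → ℝ => mono W k := by
  unfold mono
  fun_prop

theorem mono_le_mono_iff {W : Fin m → ℝ} (hW : ∀ i, 0 < W i) (k l : Fin m → ℕ) :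
    mono W k ≤ mono W l ↔ 0 ≤ ∑ i, ((l i : ℝ) - k i) * Real.log (W i) := by
  have hexp (k : Fin m → ℕ) : mono W k = Real.exp (∑ i, (k i : ℝ) * Real.log (W i)) := by
    rw [Real.exp_sum]
    exact Finset.prod_congr rfl fun i _ => by rw [Real.exp_nat_mul, Real.exp_log (hW i)]
  simp only [hexp, Real.exp_le_exp, ← sub_nonneg (b := ∑ i, (k i : ℝ) * _),
    ← Finset.sum_sub_distrib, sub_mul]

end Monomials

namespace IsChamber

variable {m n : ℕ} {Γ : Set (Fin m → ℝ)} {q : Fin m → ℝ}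

theorem isPreconnected (hΓ : IsChamber m n Γ) : IsPreconnected Γ := by
  obtain ⟨u, -, rfl⟩ := hΓ
  exact isPreconnected_connectedComponentIn

theorem sum_sub_mul_ne_zero (hΓ : IsChamber m n Γ) {u : Fin m → ℝ} (hu : u ∈ Γ)
    {k l : Fin m → ℕ} (hk : k ∈ countFinset m n) (hl : l ∈ countFinset m n) (hkl : k ≠ l) :
    ∑ i, ((k i : ℝ) - l i) * u i ≠ 0 := by
  obtain ⟨u₀, -, rfl⟩ := hΓ
  exact notMem_hyperUnion_iff.1 (connectedComponentIn_subset _ _ hu) k hk l hl hkl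

theorem mono_le_of_mem_chamberFace (hΓ : IsChamber m n Γ) {W₁ W₂ : Fin m → ℝ}
    (h₁ : W₁ ∈ chamberFace q Γ) (h₂ : W₂ ∈ chamberFace q Γ) {k l : Fin m → ℕ}
    (hk : k ∈ countFinset m n) (hl : l ∈ countFinset m n) (h : mono W₁ k ≤ mono W₁ l) :
    mono W₂ k ≤ mono W₂ l := by
  rcases eq_or_ne l k with rfl | hlk
  · exact le_rfl
  rw [mono_le_mono_iff h₁.1.1] at h
  rw [mono_le_mono_iff h₂.1.1]
  have hg : ContinuousOn (fun u : Fin m → ℝ => ∑ i, ((l i : ℝ) - k i) * u i) Γ := by fun_prop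
  have h0 (u : Fin m → ℝ) (hu : u ∈ Γ) := hΓ.sum_sub_mul_ne_zero hu hl hk hlk
  exact (hΓ.isPreconnected.pos_of_pos hg h0 h₁.2 h₂.2 (h.lt_of_ne' (h0 _ h₁.2))).le

theorem mono_le_iff_of_mem_chamberFace (hΓ : IsChamber m n Γ) {W₁ W₂ : Fin m → ℝ}
    (h₁ : W₁ ∈ chamberFace q Γ) (h₂ : W₂ ∈ chamberFace q Γ) {k l : Fin m → ℕ}
    (hk : k ∈ countFinset m n) (hl : l ∈ countFinset m n) :
    mono W₁ k ≤ mono W₁ l ↔ mono W₂ k ≤ mono W₂ l :=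
  ⟨hΓ.mono_le_of_mem_chamberFace h₁ h₂ hk hl, hΓ.mono_le_of_mem_chamberFace h₂ h₁ hk hl⟩

theorem mono_lt_iff_of_mem_chamberFace (hΓ : IsChamber m n Γ) {W₁ W₂ : Fin m → ℝ}
    (h₁ : W₁ ∈ chamberFace q Γ) (h₂ : W₂ ∈ chamberFace q Γ) {k l : Fin m → ℕ}
    (hk : k ∈ countFinset m n) (hl : l ∈ countFinset m n) :
    mono W₁ k < mono W₁ l ↔ mono W₂ k < mono W₂ l := by
  simpa only [not_le] using (hΓ.mono_le_iff_of_mem_chamberFace h₁ h₂ hl hk).not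

theorem mono_le_of_mem_closure (hΓ : IsChamber m n Γ) {W₀ W : Fin m → ℝ}
    (h₀ : W₀ ∈ chamberFace q Γ) (hW : W ∈ closure (chamberFace q Γ)) {k l : Fin m → ℕ}
    (hk : k ∈ countFinset m n) (hl : l ∈ countFinset m n) (h : mono W₀ k ≤ mono W₀ l) :
    mono W k ≤ mono W l :=
  closure_minimal (fun _ hW' => hΓ.mono_le_of_mem_chamberFace h₀ hW' hk hl h)
    (isClosed_le (continuous_mono k) (continuous_mono l)) hW

theorem mono_lt_of_mem_closure (hΓ : IsChamber m n Γ) {W₀ W : Fin m → ℝ}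
    (h₀ : W₀ ∈ chamberFace q Γ) (hW : W ∈ closure (chamberFace q Γ)) {k l : Fin m → ℕ}
    (hk : k ∈ countFinset m n) (hl : l ∈ countFinset m n) (h : mono W k < mono W l) :
    mono W₀ k < mono W₀ l := by
  by_contra! h'
  exact (hΓ.mono_le_of_mem_closure h₀ hW hl hk h').not_gt h

end IsChamber

theorem exists_isChamber_eventually_mem {m n : ℕ} {γ : ℝ → Fin m → ℝ}
    (hγ : ContinuousOn γ (Set.Ioi 0)) (h : ∀ᶠ ε in 𝓝[>] (0 : ℝ), γ ε ∉ hyperUnion m n) :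
    ∃ Γ, IsChamber m n Γ ∧ ∀ᶠ ε in 𝓝[>] (0 : ℝ), γ ε ∈ Γ := by
  obtain ⟨ε₀, hε₀, hsub⟩ := mem_nhdsGT_iff_exists_Ioc_subset.1 h
  have hmem : ε₀ ∈ Set.Ioc 0 ε₀ := ⟨hε₀, le_rfl⟩
  refine ⟨_, ⟨γ ε₀, hsub hmem, rfl⟩, ?_⟩
  filter_upwards [Ioc_mem_nhdsGT hε₀] with ε hε
  have hpre : IsPreconnected (γ '' Set.Ioc 0 ε₀) :=
    isPreconnected_Ioc.image _ (hγ.mono Set.Ioc_subset_Ioi_self)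
  exact hpre.subset_connectedComponentIn (Set.mem_image_of_mem _ hmem)
    ((Set.image_subset_iff (t := (hyperUnion m n)ᶜ)).2 hsub) (Set.mem_image_of_mem _ hε)

section Perturbation

variable {m n : ℕ}

def logPerturb (W v : Fin m → ℝ) (ε : ℝ) : Fin m → ℝ :=
  fun i => (if W i = 0 then -ε⁻¹ else Real.log (W i)) + ε * v i

theorem continuousOn_logPerturb (W v : Fin m → ℝ) :
    ContinuousOn (logPerturb W v) (Set.Ioi 0) := by
  refine continuousOn_pi.2 fun i => ?_
  simp only [logPerturb]
  split_ifs
  · exact ((continuousOn_inv₀.mono fun ε hε => ne_of_gt hε).neg).add (by fun_prop)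
  · fun_prop

theorem tendsto_exp_logPerturb {W : Fin m → ℝ} (hW : ∀ i, 0 ≤ W i) (v : Fin m → ℝ) :
    Tendsto (fun ε i => Real.exp (logPerturb W v ε i)) (𝓝[>] 0) (𝓝 W) := by
  refine tendsto_pi_nhds.2 fun i => ?_
  have hv : Tendsto (fun ε : ℝ => ε * v i) (𝓝[>] 0) (𝓝 0) :=
    ((continuous_mul_const (v i)).tendsto' 0 0 (zero_mul _)).mono_left nhdsWithin_le_nhds
  simp only [logPerturb]
  split_ifs with h
  · rw [h]
    exact Real.tendsto_exp_atBot.comp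
      ((tendsto_neg_atTop_atBot.comp tendsto_inv_nhdsGT_zero).atBot_add hv)
  · have hlim := (Real.continuous_exp.tendsto _).comp (hv.const_add (Real.log (W i)))
    rwa [add_zero, Real.exp_log ((hW i).lt_of_ne' h)] at hlim

theorem mul_sum_mul_logPerturb (W v d : Fin m → ℝ) {ε : ℝ} (hε : ε ≠ 0) :
    ε * ∑ i, d i * logPerturb W v ε i = (∑ i, d i * if W i = 0 then -1 else 0) +
      (∑ i, d i * if W i = 0 then 0 else Real.log (W i)) * ε + (∑ i, d i * v i) * ε ^ 2 := by
  simp only [Finset.mul_sum, Finset.sum_mul, ← Finset.sum_add_distrib]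
  refine Finset.sum_congr rfl fun i _ => ?_
  simp only [logPerturb]
  split_ifs <;> field_simp <;> ring

theorem eventually_sum_mul_logPerturb_ne_zero (W : Fin m → ℝ) {v d : Fin m → ℝ}
    (hd : ∑ i, d i * v i ≠ 0) : ∀ᶠ ε in 𝓝[>] (0 : ℝ), ∑ i, d i * logPerturb W v ε i ≠ 0 := by
  filter_upwards [nhdsGT_le_nhdsNE 0 <| eventually_nhdsNE_quadratic_ne_zero
      (a := ∑ i, d i * if W i = 0 then -1 else 0)
      (b := ∑ i, d i * if W i = 0 then 0 else Real.log (W i)) hd 0,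
    self_mem_nhdsWithin] with ε hε hpos h0
  rw [← mul_sum_mul_logPerturb W v d (ne_of_gt hpos), h0, mul_zero] at hε
  exact hε rfl

theorem eventually_logPerturb_notMem_hyperUnion (W : Fin m → ℝ) {v : Fin m → ℝ}
    (hv : ∀ k ∈ countFinset m n, ∀ l ∈ countFinset m n, k ≠ l →
      ∑ i, ((k i : ℝ) - l i) * v i ≠ 0) :
    ∀ᶠ ε in 𝓝[>] (0 : ℝ), logPerturb W v ε ∉ hyperUnion m n := by
  simp only [notMem_hyperUnion_iff]
  refine (eventually_all_finset _).2 fun k hk => (eventually_all_finset _).2 fun l hl => ?_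
  rcases eq_or_ne k l with rfl | hkl
  · exact Eventually.of_forall fun _ h => (h rfl).elim
  exact (eventually_sum_mul_logPerturb_ne_zero W (hv k hk l hl hkl)).mono fun _ h _ => h

theorem exists_isChamber_mem_closure_chamberFace {q W : Fin m → ℝ} (hq : ∀ i, 0 < q i)
    (hW : W ∈ closedSimplex q) : ∃ Γ, IsChamber m n Γ ∧ W ∈ closure (chamberFace q Γ) := by
  obtain ⟨v, hv⟩ := exists_forall_sum_sub_mul_ne_zero m n
  have huniv : (Finset.univ : Finset (Fin m)).Nonempty :=
    Finset.nonempty_of_sum_ne_zero (hW.2.trans_ne one_ne_zero)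
  set x : ℝ → Fin m → ℝ := fun ε i => Real.exp (logPerturb W v ε i)
  set s : ℝ → ℝ := fun ε => ∑ j, q j * x ε j
  have hs (ε : ℝ) : 0 < s ε := Finset.sum_pos (fun j _ => mul_pos (hq j) (Real.exp_pos _)) huniv
  set Φ : ℝ → Fin m → ℝ := fun ε i => x ε i / s ε
  have hΦ (ε : ℝ) : Φ ε ∈ openSimplex q := by
    refine ⟨fun i => div_pos (Real.exp_pos _) (hs ε), ?_⟩
    simp only [Φ, mul_div_assoc', ← Finset.sum_div]
    exact div_self (hs ε).ne'
  have hlogΦ (ε : ℝ) :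
      (fun i => Real.log (Φ ε i)) = fun i => logPerturb W v ε i + -Real.log (s ε) := by
    funext i
    rw [Real.log_div (Real.exp_pos _).ne' (hs ε).ne', Real.log_exp, sub_eq_add_neg]
  have hx : ContinuousOn x (Set.Ioi 0) := continuousOn_pi.2 fun i =>
    Real.continuous_exp.comp_continuousOn (continuousOn_pi.1 (continuousOn_logPerturb W v) i)
  have hcont : ContinuousOn (fun ε i => Real.log (Φ ε i)) (Set.Ioi 0) := by
    rw [show (fun ε i => Real.log (Φ ε i)) = _ from funext hlogΦ]
    refine continuousOn_pi.2 fun i => (continuousOn_pi.1 (continuousOn_logPerturb W v) i).add ?_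
    exact ((continuousOn_finsetSum _ fun j _ => continuousOn_const.mul
      (continuousOn_pi.1 hx j)).log fun ε _ => (hs ε).ne').neg
  obtain ⟨Γ, hΓ, hmem⟩ := exists_isChamber_eventually_mem hcont
    ((eventually_logPerturb_notMem_hyperUnion W hv).mono fun ε h =>
      hlogΦ ε ▸ notMem_hyperUnion_add_const h _)
  have hlim : Tendsto Φ (𝓝[>] 0) (𝓝 W) := by
    have hxlim := tendsto_exp_logPerturb hW.1 v
    have hslim : Tendsto s (𝓝[>] 0) (𝓝 1) := hW.2 ▸
      tendsto_finsetSum _ fun j _ => (tendsto_pi_nhds.1 hxlim j).const_mul (q j)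
    simpa using tendsto_pi_nhds.2 fun i => (tendsto_pi_nhds.1 hxlim i).div hslim one_ne_zero
  exact ⟨Γ, hΓ, mem_closure_of_tendsto hlim (hmem.mono fun ε hε => ⟨hΦ ε, hε⟩)⟩

end Perturbation

section Simplex

variable {m : ℕ} {q : Fin m → ℝ}

theorem isClosed_closedSimplex (q : Fin m → ℝ) : IsClosed (closedSimplex q) := by
  simp only [closedSimplex, Set.ofPred_and, Set.ofPred_forall]
  exact (isClosed_iInter fun i => isClosed_le continuous_const (continuous_apply i)).inter
    (isClosed_eq (by fun_prop) continuous_const)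

theorem isCompact_closedSimplex (hq : ∀ i, 0 < q i) : IsCompact (closedSimplex q) := by
  refine (isCompact_univ_pi fun i => isCompact_Icc (a := 0) (b := 1 / q i)).of_isClosed_subset
    (isClosed_closedSimplex q) fun W hW => Set.mem_univ_pi.2 fun i => ⟨hW.1 i, ?_⟩
  rw [le_div_iff₀' (hq i), ← hW.2]
  exact Finset.single_le_sum (fun j _ => mul_nonneg (hq j).le (hW.1 j)) (Finset.mem_univ i)

theorem closure_chamberFace_subset (Γ : Set (Fin m → ℝ)) :
    closure (chamberFace q Γ) ⊆ closedSimplex q :=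
  closure_minimal (fun _ hW => ⟨fun i => (hW.1.1 i).le, hW.1.2⟩) (isClosed_closedSimplex q)

theorem isCompact_closure_chamberFace (hq : ∀ i, 0 < q i) (Γ : Set (Fin m → ℝ)) :
    IsCompact (closure (chamberFace q Γ)) :=
  (isCompact_closedSimplex hq).of_isClosed_subset isClosed_closure (closure_chamberFace_subset Γ)

end Simplex

section Quantile

variable {m n : ℕ} {p q : Fin m → ℝ} {α : ℝ}

theorem le_upperQuantile (hα : 0 < α) {W : Fin m → ℝ} (hW : ∀ i, 0 ≤ W i) {t : ℝ}
    (ht : 0 ≤ t) (h : α ≤ ∑ k ∈ countFinset m n, if t ≤ mono W k then countProb p k else 0) :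
    t ≤ upperQuantile p n α W := by
  refine le_csSup ⟨∑ k ∈ countFinset m n, mono W k, ?_⟩ ⟨ht, h⟩
  rintro s ⟨-, hs⟩
  obtain ⟨k, hk, hsk⟩ : ∃ k ∈ countFinset m n, s ≤ mono W k := by
    by_contra! hlt
    rw [Finset.sum_eq_zero fun k hk => if_neg (hlt k hk).not_ge] at hs
    linarith
  exact hsk.trans (Finset.single_le_sum (fun l _ => mono_nonneg hW l) hk)

theorem upperQuantile_le (hp : ∀ i, 0 ≤ p i) {W : Fin m → ℝ} {t : ℝ} (ht : 0 ≤ t)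
    (h : (∑ k ∈ countFinset m n, if t < mono W k then countProb p k else 0) < α) :
    upperQuantile p n α W ≤ t := by
  refine Real.sSup_le (fun s hs => ?_) ht
  by_contra! hts
  have := sum_ite_le_sum_ite (s := countFinset m n) (fun k _ => countProb_nonneg hp k)
    fun k _ (hsk : s ≤ mono W k) => hts.trans_le hsk
  linarith [hs.2]

theorem exists_isQuantileVec (hpsum : ∑ i, p i = 1) (hα₀ : 0 < α) (hα₁ : α ≤ 1)
    {Γ : Set (Fin m → ℝ)} (hΓ : IsChamber m n Γ) (hne : (chamberFace q Γ).Nonempty) :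
    ∃ k, IsQuantileVec p q n α Γ k := by
  obtain ⟨W₀, hW₀⟩ := hne
  obtain ⟨k, hk, hle, hlt⟩ := exists_weighted_quantile (countFinset m n) (mono W₀) (countProb p)
    hα₀ (by rwa [sum_countProb hpsum])
  refine ⟨k, hk, fun W hW => ⟨?_, ?_⟩⟩
  · rwa [Finset.sum_congr rfl fun l hl =>
      if_congr (hΓ.mono_le_iff_of_mem_chamberFace hW hW₀ hk hl) rfl rfl]
  · rwa [Finset.sum_congr rfl fun l hl =>
      if_congr (hΓ.mono_lt_iff_of_mem_chamberFace hW hW₀ hk hl) rfl rfl]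

theorem IsQuantileVec.upperQuantile_eq (hp : ∀ i, 0 ≤ p i) (hα : 0 < α)
    {Γ : Set (Fin m → ℝ)} (hΓ : IsChamber m n Γ) {k : Fin m → ℕ}
    (hk : IsQuantileVec p q n α Γ k) {W : Fin m → ℝ} (hW : W ∈ closure (chamberFace q Γ)) :
    upperQuantile p n α W = mono W k := by
  obtain ⟨W₀, hW₀⟩ := closure_nonempty_iff.1 ⟨W, hW⟩
  have hW0 : ∀ i, 0 ≤ W i := (closure_chamberFace_subset Γ hW).1
  obtain ⟨hle, hlt⟩ := hk.2 W₀ hW₀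
  have hπ (l : Fin m → ℕ) (_ : l ∈ countFinset m n) := countProb_nonneg hp l
  refine le_antisymm (upperQuantile_le hp (mono_nonneg hW0 k) ?_)
    (le_upperQuantile hα hW0 (mono_nonneg hW0 k) ?_)
  · exact (sum_ite_le_sum_ite hπ fun l hl => hΓ.mono_lt_of_mem_closure hW₀ hW hk.1 hl).trans_lt hlt
  · exact hle.trans (sum_ite_le_sum_ite hπ fun l hl => hΓ.mono_le_of_mem_closure hW₀ hW hk.1 hl)

end Quantile

theorem chamber_decomposition_general (m n : ℕ)
    (p q : Fin m → ℝ) (hp : ∀ i, 0 < p i ∧ p i < 1) (hpsum : ∑ i, p i = 1)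
    (hq : ∀ i, 0 < q i) (α : ℝ) (hα : 0 < α ∧ α < 1) :
    sSup (upperQuantile p n α '' closedSimplex q) =
      sSup {v : ℝ | ∃ Γ : Set (Fin m → ℝ), ∃ k : Fin m → ℕ,
        IsChamber m n Γ ∧ (chamberFace q Γ).Nonempty ∧ IsQuantileVec p q n α Γ k ∧
        v = sSup ((fun W => mono W k) '' closure (chamberFace q Γ))} := by
  have hp₀ (i : Fin m) : 0 ≤ p i := (hp i).1.le
  refine csSup_eq_csSup_of_forall_exists_le ?_ ?_
  · rintro _ ⟨W, hW, rfl⟩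
    obtain ⟨Γ, hΓ, hWΓ⟩ := exists_isChamber_mem_closure_chamberFace (n := n) hq hW
    have hne : (chamberFace q Γ).Nonempty := closure_nonempty_iff.1 ⟨W, hWΓ⟩
    obtain ⟨k, hk⟩ := exists_isQuantileVec hpsum hα.1 hα.2.le hΓ hne
    refine ⟨_, ⟨Γ, k, hΓ, hne, hk, rfl⟩, ?_⟩
    rw [hk.upperQuantile_eq hp₀ hα.1 hΓ hWΓ]
    exact le_csSup ((isCompact_closure_chamberFace hq Γ).bddAbove_image
      (continuous_mono k).continuousOn) ⟨W, hWΓ, rfl⟩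
  · rintro _ ⟨Γ, k, hΓ, hne, hk, rfl⟩
    obtain ⟨W, hW, hmax⟩ := (isCompact_closure_chamberFace hq Γ).exists_sSup_image_eq
      hne.closure (continuous_mono k).continuousOn
    exact ⟨_, ⟨W, closure_chamberFace_subset Γ hW, rfl⟩,
      (hmax.trans (hk.upperQuantile_eq hp₀ hα.1 hΓ hW).symm).le⟩

/-- **Finite chamber decomposition of the quantile problem.** The supremum of the upper
`α`-quantile over the closed simplex equals the maximum, over admissible chambers `Γ`
with quantile count vector `k = k_{α,Γ}`, of the supremum of the monomial `W^k` over
the closure of `F_Γ`. -/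
theorem chamber_decomposition (m n : ℕ) (hm : 2 ≤ m) (hn : 1 ≤ n)
    (p q : Fin m → ℝ) (hp : ∀ i, 0 < p i ∧ p i < 1) (hpsum : ∑ i, p i = 1)
    (hq : ∀ i, 0 < q i) (α : ℝ) (hα : 0 < α ∧ α < 1) :
    sSup (upperQuantile p n α '' closedSimplex q) =
      sSup {v : ℝ | ∃ Γ : Set (Fin m → ℝ), ∃ k : Fin m → ℕ,
        IsChamber m n Γ ∧ (chamberFace q Γ).Nonempty ∧ IsQuantileVec p q n α Γ k ∧
        v = sSup ((fun W => mono W k) '' closure (chamberFace q Γ))} :=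
  chamber_decomposition_general m n p q hp hpsum hq α hα
end
end

section
/- Boundary case of the structural theorem: Fix α ∈ (0,1) and an admissible chamber Γ with quantile count vector k := k_{α,Γ}, and let W^{(k)} ∈ W̄ be the shadow-Kelly point W^{(k)}_i = k_i/(n q_i). If W^{(k)} ∉ cl(F_Γ), then every maximizer of the continuous function W ↦ W^{k} over the compact set cl(F_Γ) lies in cl(F_Γ) \ F_Γ, i.e. no maximizer lies in the open chamber F_Γ. -/
/-!
`W ↦ W^k` is log-concave, and on the budget plane its maximum is attained only at the
shadow-Kelly point `K = W^{(k)}` (Gibbs' inequality, from `log x < x - 1` for `x ≠ 1`). If a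
maximizer `W⋆` over `cl(F_Γ)` lay in `F_Γ`, then `W⋆ ≠ K`, so `W⋆^k < K^k`, and by
log-concavity every point `(1 - t) W⋆ + t K` with `0 < t ≤ 1` has a strictly larger value.
These points stay on the budget plane, and since `F_Γ` is relatively open there, they lie in
`F_Γ` for small `t`, contradicting maximality.
-/

open Finset Filter Topology
open scoped Classical

noncomputable section

def shadowKelly {m : ℕ} (q : Fin m → ℝ) (n : ℕ) (k : Fin m → ℕ) : Fin m → ℝ :=
  fun i => (k i : ℝ) / (n * q i)

lemma shadowKelly_mem_closedSimplex {m n : ℕ} {q : Fin m → ℝ} {k : Fin m → ℕ}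
    (hq : ∀ i, 0 < q i) (hn : 0 < n) (hk : ∑ i, k i = n) :
    shadowKelly q n k ∈ closedSimplex q := by
  have hn' : (0 : ℝ) < n := by exact_mod_cast hn
  refine ⟨fun i => div_nonneg (Nat.cast_nonneg _) (mul_pos hn' (hq i)).le, ?_⟩
  have hterm : ∀ i, q i * shadowKelly q n k i = k i / n := fun i => by
    simp only [shadowKelly]
    field_simp [(hq i).ne']
  rw [sum_congr rfl fun i _ => hterm i, ← sum_div, ← Nat.cast_sum, hk, div_self hn'.ne']

lemma mono_pos {m : ℕ} {W : Fin m → ℝ} (hW : ∀ i, 0 < W i) (k : Fin m → ℕ) : 0 < mono W k :=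
  prod_pos fun i _ => pow_pos (hW i) _

lemma log_mono {m : ℕ} {W : Fin m → ℝ} {k : Fin m → ℕ} (hW : 0 < mono W k) :
    Real.log (mono W k) = ∑ i, k i * Real.log (W i) := by
  rw [mono, Real.log_prod (prod_ne_zero_iff.mp hW.ne')]
  simp only [Real.log_pow]

lemma mul_log_sub_log_div_lt {w c : ℝ} (k : ℕ) (hw : 0 < w) (hc : 0 < c) (hne : w ≠ k / c) :
    k * (Real.log w - Real.log (k / c)) < c * w - k := by
  rcases (k.eq_zero_or_pos) with rfl | hk
  · simpa using mul_pos hc hw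
  · have hk' : (0 : ℝ) < k := by exact_mod_cast hk
    have hx : 0 < c * w / k := by positivity
    have hx1 : c * w / k ≠ 1 := fun h => hne (by field_simp at h ⊢; linarith)
    have hlog : Real.log w - Real.log (k / c) = Real.log (c * w / k) := by
      rw [← Real.log_div hw.ne' (by positivity)]
      congr 1
      field_simp
    calc (k : ℝ) * (Real.log w - Real.log (k / c)) < k * (c * w / k - 1) := by
          rw [hlog]
          exact mul_lt_mul_of_pos_left (Real.log_lt_sub_one_of_pos hx hx1) hk'
      _ = c * w - k := by field_simp

lemma mul_log_sub_log_div_le {w c : ℝ} (k : ℕ) (hw : 0 < w) (hc : 0 < c) :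
    k * (Real.log w - Real.log (k / c)) ≤ c * w - k := by
  by_cases hwk : w = k / c
  · subst hwk
    field_simp
    simp
  · exact (mul_log_sub_log_div_lt k hw hc hwk).le

lemma mono_lt_mono_shadowKelly {m n : ℕ} {q W : Fin m → ℝ} {k : Fin m → ℕ}
    (hq : ∀ i, 0 < q i) (hn : 0 < n) (hk : ∑ i, k i = n) (hW : W ∈ openSimplex q)
    (hne : W ≠ shadowKelly q n k) : mono W k < mono (shadowKelly q n k) k := by
  have hn' : (0 : ℝ) < n := by exact_mod_cast hn
  have hc : ∀ i, 0 < (n : ℝ) * q i := fun i => mul_pos hn' (hq i)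
  have hKpos : 0 < mono (shadowKelly q n k) k := prod_pos fun i _ => by
    rcases (k i).eq_zero_or_pos with h | h
    · simp [h]
    · exact pow_pos (div_pos (by exact_mod_cast h) (hc i)) _
  obtain ⟨i, hi⟩ := Function.ne_iff.mp hne
  rw [← Real.log_lt_log_iff (mono_pos hW.1 k) hKpos, log_mono (mono_pos hW.1 k), log_mono hKpos,
    ← sub_neg, ← sum_sub_distrib]
  calc ∑ j, ((k j : ℝ) * Real.log (W j) - k j * Real.log (shadowKelly q n k j))
      = ∑ j, (k j : ℝ) * (Real.log (W j) - Real.log (k j / (n * q j))) := by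
        simp only [mul_sub, shadowKelly]
    _ < ∑ j, ((n * q j) * W j - k j) :=
        sum_lt_sum (fun j _ => mul_log_sub_log_div_le (k j) (hW.1 j) (hc j))
          ⟨i, mem_univ _, mul_log_sub_log_div_lt (k i) (hW.1 i) (hc i) hi⟩
    _ = 0 := by
        simp only [sum_sub_distrib, mul_assoc, ← mul_sum, hW.2]
        rw [← Nat.cast_sum, hk]
        ring

lemma mono_rpow_mul_le_mono_segment {m : ℕ} {W K : Fin m → ℝ} (hW : ∀ i, 0 ≤ W i)
    (hK : ∀ i, 0 ≤ K i) (k : Fin m → ℕ) {t : ℝ} (ht0 : 0 ≤ t) (ht1 : t ≤ 1) :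
    mono W k ^ (1 - t) * mono K k ^ t ≤ mono ((1 - t) • W + t • K) k := by
  calc mono W k ^ (1 - t) * mono K k ^ t = ∏ i, (W i ^ (1 - t) * K i ^ t) ^ k i := by
        simp only [mono]
        rw [← Real.finsetProd_rpow _ _ (fun i _ => pow_nonneg (hW i) _),
          ← Real.finsetProd_rpow _ _ (fun i _ => pow_nonneg (hK i) _), ← prod_mul_distrib]
        refine prod_congr rfl fun i _ => ?_
        rw [mul_pow, Real.rpow_pow_comm (hW i), Real.rpow_pow_comm (hK i)]
    _ ≤ ∏ i, ((1 - t) * W i + t * K i) ^ k i :=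
        prod_le_prod (fun i _ => by have := hW i; have := hK i; positivity) fun i _ =>
          pow_le_pow_left₀ (by have := hW i; have := hK i; positivity)
            (Real.geom_mean_le_arith_mean2_weighted (by linarith) ht0 (hW i) (hK i) (by ring)) _
    _ = mono ((1 - t) • W + t • K) k := rfl

lemma mono_lt_mono_segment {m : ℕ} {W K : Fin m → ℝ} {k : Fin m → ℕ} (hW : ∀ i, 0 ≤ W i)
    (hK : ∀ i, 0 ≤ K i) (hpos : 0 < mono W k) (hlt : mono W k < mono K k) {t : ℝ}
    (ht0 : 0 < t) (ht1 : t ≤ 1) : mono W k < mono ((1 - t) • W + t • K) k :=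
  calc mono W k = mono W k ^ (1 - t) * mono W k ^ t := by
        rw [← Real.rpow_add hpos, sub_add_cancel, Real.rpow_one]
    _ < mono W k ^ (1 - t) * mono K k ^ t :=
        mul_lt_mul_of_pos_left (Real.rpow_lt_rpow hpos.le hlt ht0) (Real.rpow_pos_of_pos hpos _)
    _ ≤ mono ((1 - t) • W + t • K) k := mono_rpow_mul_le_mono_segment hW hK k ht0.le ht1

lemma isClosed_hyperUnion (m n : ℕ) : IsClosed (hyperUnion m n) := by
  have : hyperUnion m n = ⋃ k ∈ countFinset m n, ⋃ l ∈ countFinset m n, ⋃ (_ : k ≠ l),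
      {u : Fin m → ℝ | ∑ i, ((k i : ℝ) - (l i : ℝ)) * u i = 0} := by
    ext u
    simp only [hyperUnion, Set.mem_ofPred_eq, Set.mem_iUnion, exists_prop]
  rw [this]
  exact isClosed_biUnion_finset fun k _ => isClosed_biUnion_finset fun l _ =>
    isClosed_iUnion_of_finite fun _ => isClosed_eq (by fun_prop) continuous_const

lemma IsChamber.isOpen {m n : ℕ} {Γ : Set (Fin m → ℝ)} (hΓ : IsChamber m n Γ) : IsOpen Γ := by
  obtain ⟨u, -, rfl⟩ := hΓ
  exact (isClosed_hyperUnion m n).isOpen_compl.connectedComponentIn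

lemma isOpen_setOf_pos_and_log_mem {m : ℕ} {Γ : Set (Fin m → ℝ)} (hΓ : IsOpen Γ) :
    IsOpen {W : Fin m → ℝ | (∀ i, 0 < W i) ∧ (fun i => Real.log (W i)) ∈ Γ} := by
  have hpos : IsOpen {W : Fin m → ℝ | ∀ i, 0 < W i} := by
    simpa [Set.pi] using isOpen_set_pi (Set.finite_univ (α := Fin m)) fun i _ => isOpen_Ioi
  have hlog : ContinuousOn (fun (W : Fin m → ℝ) i => Real.log (W i)) {W | ∀ i, 0 < W i} :=
    continuousOn_pi.2 fun i => Real.continuousOn_log.comp (continuous_apply i).continuousOn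
      fun W hW => (hW i).ne'
  exact hlog.isOpen_inter_preimage hpos hΓ

lemma eventually_segment_mem_chamberFace {m : ℕ} {q W K : Fin m → ℝ} {Γ : Set (Fin m → ℝ)}
    (hΓ : IsOpen Γ) (hW : W ∈ chamberFace q Γ) (hK : ∑ i, q i * K i = 1) :
    ∀ᶠ t in 𝓝 (0 : ℝ), (1 - t) • W + t • K ∈ chamberFace q Γ := by
  have hcont : Continuous fun t : ℝ => (1 - t) • W + t • K := by fun_prop
  have hmem : (fun t : ℝ => (1 - t) • W + t • K) 0 ∈
      {W : Fin m → ℝ | (∀ i, 0 < W i) ∧ (fun i => Real.log (W i)) ∈ Γ} := by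
    simpa using ⟨hW.1.1, hW.2⟩
  filter_upwards [hcont.continuousAt.preimage_mem_nhds ((isOpen_setOf_pos_and_log_mem hΓ).mem_nhds hmem)]
    with t ht
  refine ⟨⟨ht.1, ?_⟩, ht.2⟩
  simp only [Pi.add_apply, Pi.smul_apply, smul_eq_mul, mul_add, sum_add_distrib,
    mul_left_comm (q _), ← mul_sum, hW.1.2, hK]
  ring

theorem boundary_case_general (m n : ℕ) (hn : 1 ≤ n)
    (p q : Fin m → ℝ)
    (hq : ∀ i, 0 < q i) (α : ℝ)
    (Γ : Set (Fin m → ℝ)) (hΓ : IsChamber m n Γ)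
    (k : Fin m → ℕ) (hk : IsQuantileVec p q n α Γ k)
    (hWk : (fun i => (k i : ℝ) / (n * q i)) ∉ closure (chamberFace q Γ)) :
    ∀ Wstar ∈ closure (chamberFace q Γ),
      (∀ W ∈ closure (chamberFace q Γ), mono W k ≤ mono Wstar k) →
      Wstar ∉ chamberFace q Γ := by
  intro Wstar _ hmax hF
  change shadowKelly q n k ∉ _ at hWk
  have hksum : ∑ i, k i = n := (mem_filter.mp hk.1).2
  have hK := shadowKelly_mem_closedSimplex hq hn hksum
  have hlt : mono Wstar k < mono (shadowKelly q n k) k :=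
    mono_lt_mono_shadowKelly hq hn hksum hF.1 fun h => hWk (h ▸ subset_closure hF)
  obtain ⟨t, ⟨ht0, ht1⟩, htF⟩ := (Eventually.and (Ioc_mem_nhdsGT one_pos)
    (nhdsWithin_le_nhds (eventually_segment_mem_chamberFace hΓ.isOpen hF hK.2))).exists
  exact (hmax _ (subset_closure htF)).not_gt
    (mono_lt_mono_segment (fun i => (hF.1.1 i).le) hK.1 (mono_pos hF.1.1 k) hlt ht0 ht1)

/-- **Boundary case of the structural theorem.** If the shadow-Kelly point of the
quantile count vector `k = k_{α,Γ}` does not lie in the closure of `F_Γ`, then no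
maximizer of `W ↦ W^k` over `cl(F_Γ)` lies in the open chamber `F_Γ`. -/
theorem boundary_case (m n : ℕ) (hm : 2 ≤ m) (hn : 1 ≤ n)
    (p q : Fin m → ℝ) (hp : ∀ i, 0 < p i ∧ p i < 1) (hpsum : ∑ i, p i = 1)
    (hq : ∀ i, 0 < q i) (α : ℝ) (hα : 0 < α ∧ α < 1)
    (Γ : Set (Fin m → ℝ)) (hΓ : IsChamber m n Γ)
    (hadm : (chamberFace q Γ).Nonempty)
    (k : Fin m → ℕ) (hk : IsQuantileVec p q n α Γ k)
    (hWk : (fun i => (k i : ℝ) / (n * q i)) ∉ closure (chamberFace q Γ)) :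
    ∀ Wstar ∈ closure (chamberFace q Γ),
      (∀ W ∈ closure (chamberFace q Γ), mono W k ≤ mono Wstar k) →
      Wstar ∉ chamberFace q Γ :=
  boundary_case_general m n hn p q hq α Γ hΓ k hk hWk
end
end
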